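/- The set W of formulas of the strictly positive reflection calculus RC⁰ is well-founded with respect to the relation <₀, where A <₀ B iff RC⁰ derives the sequent B ⊢ ◇₀A. Consequently (together with the RC⁰-provable linearity of <₀ on W modulo mutual derivability ∼), the Beklemishev ordinal notation system (W/∼, <₀) is a well-ordering. -/

import Mathlib

/-!
STATEMENT 19. The set `W` of formulas of the strictly positive reflection calculus `RC⁰`
is well-founded with respect to the relation `<₀`, where `A <₀ B` iff `RC⁰` derives the
sequent `B ⊢ ◇₀A`.  Consequently (together with the `RC⁰`-provable linearity of `<₀` on
`W` modulo mutual derivability `∼`), the Beklemishev ordinal notation system `(W/∼, <₀)`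
is a well-ordering.
-/

/-- Formulas of the strictly positive reflection calculus `RC⁰`:
`F ::= ⊤ | F ∧ F | ◇ₙ F`. -/
inductive RCForm : Type
  | top : RCForm
  | and : RCForm → RCForm → RCForm
  | dia : ℕ → RCForm → RCForm

/-- Derivability of sequents `A ⊢ B` in the calculus `RC⁰`. -/
inductive RCSeq : RCForm → RCForm → Prop
  | id (A : RCForm) : RCSeq A A
  | top (A : RCForm) : RCSeq A .top
  | cut {A B C : RCForm} : RCSeq A B → RCSeq B C → RCSeq A C
  | andE₁ (A B : RCForm) : RCSeq (.and A B) A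
  | andE₂ (A B : RCForm) : RCSeq (.and A B) B
  | andI {A B C : RCForm} : RCSeq A B → RCSeq A C → RCSeq A (.and B C)
  | mono {A B : RCForm} (n : ℕ) : RCSeq A B → RCSeq (.dia n A) (.dia n B)
  | trans (n : ℕ) (A : RCForm) : RCSeq (.dia n (.dia n A)) (.dia n A)
  | monoN {n m : ℕ} (A : RCForm) : m < n → RCSeq (.dia n A) (.dia m A)
  | axJ {n m : ℕ} (A B : RCForm) : m < n →
      RCSeq (.and (.dia n A) (.dia m B)) (.dia n (.and A (.dia m B)))

/-- `A <₀ B` iff `RC⁰` derives the sequent `B ⊢ ◇₀A`. -/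
def RCLt0 (A B : RCForm) : Prop := RCSeq B (.dia 0 A)

/-- Mutual derivability `A ∼ B`, as a setoid on `RC⁰` formulas. -/
def RCSetoid : Setoid RCForm where
  r A B := RCSeq A B ∧ RCSeq B A
  iseqv :=
    ⟨fun A => ⟨RCSeq.id A, RCSeq.id A⟩,
     fun h => ⟨h.2, h.1⟩,
     fun h₁ h₂ => ⟨RCSeq.cut h₁.1 h₂.1, RCSeq.cut h₂.2 h₁.2⟩⟩

/-- The Beklemishev ordinal notation system: `RC⁰` formulas modulo mutual
derivability. -/
def RCW : Type := Quotient RCSetoid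

/-- The relation `<₀` descends to the quotient `W/∼`. -/
def RCWLt : RCW → RCW → Prop :=
  Quotient.lift₂ RCLt0 <| by
    intro A₁ B₁ A₂ B₂ hA hB
    refine propext ⟨fun h => ?_, fun h => ?_⟩
    · exact RCSeq.cut hB.2 (RCSeq.cut h (RCSeq.mono 0 hA.1))
    · exact RCSeq.cut hB.1 (RCSeq.cut h (RCSeq.mono 0 hA.2))

/-!
Every formula is `RC⁰`-equivalent to a worm `◇_{n₀} ⋯ ◇_{nₖ} ⊤`. Splitting a nonempty worm at
its first `0` gives `u ∼ promote h ∧ ◇₀ r` with shorter worms `h`, `r`, and Beklemishev's ordinal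
`o(u) = o(r) + ω ^ o(h)`; one induction on the size of `u` and `v` then shows that `o(u) < o(v)`
yields `v ⊢ ◇₀ u` and `o(u) = o(v)` yields `u ∼ v`, which makes `<₀` linear modulo `∼`.

Well-foundedness comes from Ignatiev's model: points are sequences `x` of ordinals with
`x (k + 1) ≤ ℓ (x k)`, where `ℓ α` is the last exponent in the Cantor normal form of `α`, and
`◇ₙ A` holds at `x` if `A` holds at a point agreeing with `x` below `n` and smaller at `n`.
`RC⁰` is sound for this model and each formula `A` holds exactly at the points above a least
point `c_A`, so `B ⊢ ◇₀ A` forces `c_A 0 < c_B 0`.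
-/

open Ordinal

namespace Ordinal

theorem add_omega0_opow_le_of_lt {s t α : Ordinal} (h : s < t + ω ^ α) :
    s + ω ^ α ≤ t + ω ^ α := by
  rcases le_or_gt s t with hst | hts
  · gcongr
  · obtain ⟨d, rfl⟩ : ∃ d, s = t + d := ⟨s - t, (Ordinal.add_sub_cancel_of_le hts.le).symm⟩
    rw [add_assoc, add_omega0_opow ((add_lt_add_iff_left t).1 h)]

theorem le_of_add_omega0_opow_eq {a b e f : Ordinal} (h : a + ω ^ e = b + ω ^ f) : f ≤ e := by
  have : a + ω ^ f ≤ a + ω ^ e :=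
    h ▸ add_omega0_opow_le_of_lt (h ▸ lt_add_of_pos_right a (opow_pos e omega0_pos))
  exact (opow_le_opow_iff_right one_lt_omega0).1 ((add_le_add_iff_left a).1 this)

theorem eq_of_add_omega0_opow_eq {a b e f : Ordinal} (h : a + ω ^ e = b + ω ^ f) : e = f :=
  le_antisymm (le_of_add_omega0_opow_eq h.symm) (le_of_add_omega0_opow_eq h)

/-- The exponent of the last term of the Cantor normal form (`0` for `α = 0`). -/
noncomputable def lastExp (α : Ordinal) : Ordinal := sInf {e | ∃ δ, α = δ + ω ^ e}

theorem lastExp_eq {α δ e : Ordinal} (h : α = δ + ω ^ e) : lastExp α = e :=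
  le_antisymm (csInf_le' ⟨δ, h⟩) <|
    le_csInf ⟨e, δ, h⟩ fun _ ⟨_, h'⟩ => (eq_of_add_omega0_opow_eq (h.symm.trans h')).le

@[simp] theorem lastExp_zero : lastExp 0 = 0 := by
  have : {e : Ordinal | ∃ δ, 0 = δ + ω ^ e} = ∅ :=
    Set.eq_empty_of_forall_notMem fun e ⟨_, h⟩ =>
      (opow_pos e omega0_pos).not_ge (le_add_self.trans h.symm.le)
  rw [lastExp, this, Ordinal.sInf_empty]

@[simp] theorem lastExp_add_one (α : Ordinal) : lastExp (α + 1) = 0 :=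
  lastExp_eq (by rw [opow_zero])

theorem exists_eq_add_omega0_opow_lastExp {α : Ordinal} (h : lastExp α ≠ 0) :
    ∃ δ, α = δ + ω ^ lastExp α := by
  have hne : {e : Ordinal | ∃ δ, α = δ + ω ^ e}.Nonempty := by
    by_contra hemp
    exact h (by rw [lastExp, Set.not_nonempty_iff_eq_empty.1 hemp, Ordinal.sInf_empty])
  exact csInf_mem hne

noncomputable def raiseLastExp (γ β : Ordinal) : Ordinal := sInf {α | γ ≤ α ∧ β ≤ lastExp α}

theorem raiseLastExp_spec (γ β : Ordinal) :
    γ ≤ raiseLastExp γ β ∧ β ≤ lastExp (raiseLastExp γ β) :=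
  csInf_mem (s := {α | γ ≤ α ∧ β ≤ lastExp α}) ⟨γ + ω ^ β, le_self_add, (lastExp_eq rfl).ge⟩

theorem raiseLastExp_le {γ β α : Ordinal} (h₁ : γ ≤ α) (h₂ : β ≤ lastExp α) :
    raiseLastExp γ β ≤ α :=
  csInf_le' ⟨h₁, h₂⟩

theorem lastExp_raiseLastExp {γ β : Ordinal} (h : lastExp γ ≤ β) :
    lastExp (raiseLastExp γ β) = β := by
  obtain ⟨hγs, hβs⟩ := raiseLastExp_spec γ β
  have hle : raiseLastExp γ β ≤ γ + ω ^ β := raiseLastExp_le le_self_add (lastExp_eq rfl).ge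
  generalize raiseLastExp γ β = s at hγs hβs hle
  refine le_antisymm ?_ hβs
  by_contra! hlt
  obtain ⟨δ, hδ⟩ := exists_eq_add_omega0_opow_lastExp (zero_le.trans_lt hlt).ne'
  rcases hγs.lt_or_eq with hγs | rfl
  · have : γ + ω ^ lastExp s ≤ γ + ω ^ β := calc
      γ + ω ^ lastExp s ≤ δ + ω ^ lastExp s := add_omega0_opow_le_of_lt (hδ ▸ hγs)
      _ = s := hδ.symm
      _ ≤ γ + ω ^ β := hle
    exact hlt.not_ge ((opow_le_opow_iff_right one_lt_omega0).1 ((add_le_add_iff_left γ).1 this))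
  · exact hlt.not_ge h


end Ordinal

namespace RCSeq

theorem dia_of_le {m n : ℕ} (h : m ≤ n) (A : RCForm) : RCSeq (.dia n A) (.dia m A) := by
  rcases h.eq_or_lt with rfl | h
  · exact .id _
  · exact .monoN A h

theorem dia_of_seq_dia {n : ℕ} {A B : RCForm} (h : RCSeq A (.dia n B)) :
    RCSeq (.dia n A) (.dia n B) :=
  .cut (.mono n h) (.trans n B)

end RCSeq

namespace RCForm

def Eqv (A B : RCForm) : Prop := RCSetoid A B

namespace Eqv

theorem refl (A : RCForm) : Eqv A A := ⟨.id A, .id A⟩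

theorem symm {A B : RCForm} (h : Eqv A B) : Eqv B A := ⟨h.2, h.1⟩

theorem trans {A B C : RCForm} (h : Eqv A B) (h' : Eqv B C) : Eqv A C :=
  ⟨.cut h.1 h'.1, .cut h'.2 h.2⟩

theorem dia (n : ℕ) {A B : RCForm} (h : Eqv A B) : Eqv (.dia n A) (.dia n B) :=
  ⟨.mono n h.1, .mono n h.2⟩

theorem and {A A' B B' : RCForm} (h : Eqv A A') (h' : Eqv B B') :
    Eqv (A.and B) (A'.and B') :=
  ⟨.andI (.cut (.andE₁ _ _) h.1) (.cut (.andE₂ _ _) h'.1),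
   .andI (.cut (.andE₁ _ _) h.2) (.cut (.andE₂ _ _) h'.2)⟩

end Eqv

theorem and_and_and_comm_eqv (A B C D : RCForm) :
    Eqv ((A.and B).and (C.and D)) ((A.and C).and (B.and D)) := by
  constructor <;>
  exact .andI (.andI (.cut (.andE₁ _ _) (.andE₁ _ _)) (.cut (.andE₂ _ _) (.andE₁ _ _)))
    (.andI (.cut (.andE₁ _ _) (.andE₂ _ _)) (.cut (.andE₂ _ _) (.andE₂ _ _)))

theorem dia_and_dia_eqv {m n : ℕ} (h : m < n) (A B : RCForm) :
    Eqv ((dia n A).and (dia m B)) (dia n (A.and (dia m B))) :=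
  ⟨.axJ A B h, .andI (.mono n (.andE₁ _ _)) (.cut (.mono n (.andE₂ _ _)) (.cut (.monoN _ h)
    (.trans m B)))⟩

def promote : RCForm → RCForm
  | top => top
  | and A B => and A.promote B.promote
  | dia n A => dia (n + 1) A.promote

theorem _root_.RCSeq.promote {A B : RCForm} (h : RCSeq A B) : RCSeq A.promote B.promote := by
  induction h with
  | id => exact .id _
  | top => exact .top _
  | cut _ _ ih₁ ih₂ => exact .cut ih₁ ih₂
  | andE₁ => exact .andE₁ _ _
  | andE₂ => exact .andE₂ _ _
  | andI _ _ ih₁ ih₂ => exact .andI ih₁ ih₂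
  | mono n _ ih => exact .mono _ ih
  | trans => exact .trans _ _
  | monoN A h => exact .monoN _ (Nat.succ_lt_succ h)
  | axJ A B h => exact .axJ _ _ (Nat.succ_lt_succ h)

theorem Eqv.promote {A B : RCForm} (h : Eqv A B) : Eqv A.promote B.promote :=
  ⟨h.1.promote, h.2.promote⟩

def worm : List ℕ → RCForm
  | [] => top
  | n :: u => dia n (worm u)

theorem worm_seq_dia_zero_top {u : List ℕ} (hu : u ≠ []) : RCSeq (worm u) (.dia 0 .top) := by
  obtain ⟨n, u, rfl⟩ := List.exists_cons_of_ne_nil hu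
  exact .cut (.mono n (.top _)) (.dia_of_le n.zero_le _)

/-- Splitting at the first `0`, `u = (wormHead u).map (· + 1) ++ 0 :: wormRem u`; if `u` has no
`0`, then `u = (wormHead u).map (· + 1)` and `wormRem u = []`. -/
def wormHead : List ℕ → List ℕ
  | [] => []
  | 0 :: _ => []
  | (n + 1) :: u => n :: wormHead u

def wormRem : List ℕ → List ℕ
  | [] => []
  | 0 :: u => u
  | (_ + 1) :: u => wormRem u

theorem wormHead_map_succ_append (h r : List ℕ) : wormHead (h.map (· + 1) ++ 0 :: r) = h := by
  induction h with
  | nil => rfl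
  | cons n h ih => simp only [List.map_cons, List.cons_append, wormHead, ih]

theorem wormRem_map_succ_append (h r : List ℕ) : wormRem (h.map (· + 1) ++ 0 :: r) = r := by
  induction h with
  | nil => rfl
  | cons n h ih => simp only [List.map_cons, List.cons_append, wormRem, ih]

theorem worm_eqv_head_and_rem {u : List ℕ} (hu : u ≠ []) :
    Eqv (worm u) ((worm (wormHead u)).promote.and (.dia 0 (worm (wormRem u)))) := by
  induction u with
  | nil => exact absurd rfl hu
  | cons n u ih =>
    cases n with
    | zero => exact ⟨.andI (.top _) (.id _), .andE₂ _ _⟩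
    | succ n =>
      rcases eq_or_ne u [] with rfl | hu'
      · exact ⟨.andI (.id _) (worm_seq_dia_zero_top (List.cons_ne_nil _ _)), .andE₁ _ _⟩
      · exact ((ih hu').dia (n + 1)).trans (dia_and_dia_eqv n.succ_pos _ _).symm

def wormWeight : List ℕ → ℕ
  | [] => 0
  | n :: u => n + 1 + wormWeight u

theorem wormWeight_head_add_rem_lt {u : List ℕ} (hu : u ≠ []) :
    wormWeight (wormHead u) + wormWeight (wormRem u) < wormWeight u := by
  induction u with
  | nil => exact absurd rfl hu
  | cons n u ih =>
    cases n with
    | zero => simp only [wormHead, wormRem, wormWeight]; omega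
    | succ n =>
      rcases eq_or_ne u [] with rfl | hu'
      · simp only [wormHead, wormRem, wormWeight]; omega
      · have := ih hu'
        simp only [wormHead, wormRem, wormWeight]; omega

noncomputable def wormOrd : List ℕ → Ordinal.{0}
  | [] => 0
  | n :: u => wormOrd (wormRem (n :: u)) + ω ^ wormOrd (wormHead (n :: u))
termination_by u => wormWeight u
decreasing_by all_goals have := wormWeight_head_add_rem_lt (List.cons_ne_nil n u); omega

@[simp] theorem wormOrd_nil : wormOrd [] = 0 := by
  rw [wormOrd]

theorem wormOrd_of_ne_nil {u : List ℕ} (hu : u ≠ []) :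
    wormOrd u = wormOrd (wormRem u) + ω ^ wormOrd (wormHead u) := by
  obtain ⟨n, u, rfl⟩ := List.exists_cons_of_ne_nil hu
  rw [wormOrd]

theorem wormOrd_rem_lt {u : List ℕ} (hu : u ≠ []) : wormOrd (wormRem u) < wormOrd u :=
  (wormOrd_of_ne_nil hu).symm ▸ lt_add_of_pos_right _ (opow_pos _ omega0_pos)

theorem wormOrd_pos {u : List ℕ} (hu : u ≠ []) : 0 < wormOrd u :=
  zero_le.trans_lt (wormOrd_rem_lt hu)

def OrdReflected (u v : List ℕ) : Prop :=
  (wormOrd u < wormOrd v → RCSeq (worm v) (.dia 0 (worm u))) ∧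
  (wormOrd u = wormOrd v → Eqv (worm u) (worm v))

theorem OrdReflected.dia_zero_of_le {u v : List ℕ} (h : OrdReflected u v)
    (hle : wormOrd u ≤ wormOrd v) : RCSeq (.dia 0 (worm v)) (.dia 0 (worm u)) := by
  rcases hle.lt_or_eq with hlt | heq
  · exact .dia_of_seq_dia (h.1 hlt)
  · exact .mono 0 (h.2 heq).2

theorem ordReflected_nil_left (v : List ℕ) : OrdReflected [] v := by
  refine ⟨fun hlt => ?_, fun heq => ?_⟩
  · exact worm_seq_dia_zero_top (by rintro rfl; simp at hlt)
  · obtain rfl : v = [] := by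
      by_contra hv
      exact (wormOrd_pos hv).ne (by simpa using heq)
    exact .refl _

theorem ordReflected_nil_right {u : List ℕ} (hu : u ≠ []) : OrdReflected u [] := by
  simp only [OrdReflected, wormOrd_nil, (wormOrd_pos hu).ne', not_lt_zero, false_imp_iff,
    and_self]

section Step

variable {u v : List ℕ}

theorem seq_dia_zero_of_wormOrd_lt (hu : u ≠ []) (hv : v ≠ [])
    (IH : ∀ u' v', wormWeight u' + wormWeight v' < wormWeight u + wormWeight v → OrdReflected u' v')
    (hlt : wormOrd u < wormOrd v) : RCSeq (worm v) (.dia 0 (worm u)) := by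
  have hwu := wormWeight_head_add_rem_lt hu
  have hwv := wormWeight_head_add_rem_lt hv
  have hu' := worm_eqv_head_and_rem hu
  have hv' := worm_eqv_head_and_rem hv
  rcases le_or_gt (wormOrd u) (wormOrd (wormRem v)) with hle | hremv
  · exact .cut hv'.1 (.cut (.andE₂ _ _) ((IH u (wormRem v) (by omega)).dia_zero_of_le hle))
  have hhead : wormOrd (wormHead u) < wormOrd (wormHead v) := by
    by_contra! hle
    refine hlt.not_ge ?_
    calc wormOrd v = wormOrd (wormRem v) + ω ^ wormOrd (wormHead v) := wormOrd_of_ne_nil hv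
      _ ≤ wormOrd (wormRem v) + ω ^ wormOrd (wormHead u) := by gcongr; exact omega0_pos
      _ ≤ wormOrd (wormRem u) + ω ^ wormOrd (wormHead u) :=
        add_omega0_opow_le_of_lt (wormOrd_of_ne_nil hu ▸ hremv)
      _ = wormOrd u := (wormOrd_of_ne_nil hu).symm
  -- `v ⊢ promote (head v) ∧ ◇₀ (rem u) ⊢ ◇₁ promote (head u) ∧ ◇₀ (rem u) ⊢ ◇₁ u`
  have hH := ((IH _ _ (by omega)).1 hhead).promote
  have hR := (IH (wormRem u) v (by omega)).1 ((wormOrd_rem_lt hu).trans hlt)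
  exact .cut (.andI (.cut hv'.1 (.cut (.andE₁ _ _) hH)) hR)
    (.cut (.axJ _ _ Nat.one_pos) (.cut (.mono 1 hu'.2) (.monoN _ Nat.one_pos)))

theorem eqv_of_wormOrd_eq (hu : u ≠ []) (hv : v ≠ [])
    (IH : ∀ u' v', wormWeight u' + wormWeight v' < wormWeight u + wormWeight v → OrdReflected u' v')
    (heq : wormOrd u = wormOrd v) : Eqv (worm u) (worm v) := by
  have hwu := wormWeight_head_add_rem_lt hu
  have hwv := wormWeight_head_add_rem_lt hv
  have hu' := worm_eqv_head_and_rem hu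
  have hv' := worm_eqv_head_and_rem hv
  have hhead : wormOrd (wormHead u) = wormOrd (wormHead v) :=
    eq_of_add_omega0_opow_eq (by rw [← wormOrd_of_ne_nil hu, ← wormOrd_of_ne_nil hv, heq])
  have hH := ((IH _ _ (by omega)).2 hhead).promote
  have hRu := (IH (wormRem u) v (by omega)).1 (heq ▸ wormOrd_rem_lt hu)
  have hRv := (IH (wormRem v) u (by omega)).1 (heq ▸ wormOrd_rem_lt hv)
  exact ⟨.cut (.andI (.cut hu'.1 (.cut (.andE₁ _ _) hH.1)) hRv) hv'.2,
    .cut (.andI (.cut hv'.1 (.cut (.andE₁ _ _) hH.2)) hRu) hu'.2⟩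

end Step

theorem ordReflected (u v : List ℕ) : OrdReflected u v := by
  rcases eq_or_ne u [] with rfl | hu
  · exact ordReflected_nil_left v
  rcases eq_or_ne v [] with rfl | hv
  · exact ordReflected_nil_right hu
  have IH (u' v' : List ℕ) (_ : wormWeight u' + wormWeight v' < wormWeight u + wormWeight v) :
      OrdReflected u' v' :=
    ordReflected u' v'
  exact ⟨seq_dia_zero_of_wormOrd_lt hu hv IH, eqv_of_wormOrd_eq hu hv IH⟩
termination_by wormWeight u + wormWeight v

theorem exists_dia_zero_worm_eqv_and (s t : List ℕ) :
    ∃ r, Eqv ((dia 0 (worm s)).and (dia 0 (worm t))) (dia 0 (worm r)) := by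
  rcases le_total (wormOrd s) (wormOrd t) with h | h
  · exact ⟨t, .andE₂ _ _, .andI ((ordReflected s t).dia_zero_of_le h) (.id _)⟩
  · exact ⟨s, .andE₁ _ _, .andI (.id _) ((ordReflected t s).dia_zero_of_le h)⟩

theorem exists_worm_eqv_and (u v : List ℕ) : ∃ w, Eqv ((worm u).and (worm v)) (worm w) := by
  rcases eq_or_ne u [] with rfl | hu
  · exact ⟨v, .andE₂ _ _, .andI (.top _) (.id _)⟩
  rcases eq_or_ne v [] with rfl | hv
  · exact ⟨u, .andE₁ _ _, .andI (.id _) (.top _)⟩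
  have := wormWeight_head_add_rem_lt hu
  have := wormWeight_head_add_rem_lt hv
  obtain ⟨h, hh⟩ := exists_worm_eqv_and (wormHead u) (wormHead v)
  obtain ⟨r, hr⟩ := exists_dia_zero_worm_eqv_and (wormRem u) (wormRem v)
  refine ⟨h.map (· + 1) ++ 0 :: r, ?_⟩
  have hw := worm_eqv_head_and_rem (u := h.map (· + 1) ++ 0 :: r) (by simp)
  rw [wormHead_map_succ_append, wormRem_map_succ_append] at hw
  exact ((worm_eqv_head_and_rem hu).and (worm_eqv_head_and_rem hv)).trans
    ((and_and_and_comm_eqv _ _ _ _).trans ((hh.promote.and hr).trans hw.symm))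
termination_by wormWeight u + wormWeight v

theorem exists_worm_eqv : ∀ A : RCForm, ∃ u, Eqv A (worm u)
  | top => ⟨[], .refl _⟩
  | and A B =>
    have ⟨u, hu⟩ := exists_worm_eqv A
    have ⟨v, hv⟩ := exists_worm_eqv B
    have ⟨w, hw⟩ := exists_worm_eqv_and u v
    ⟨w, (hu.and hv).trans hw⟩
  | dia n A =>
    have ⟨u, hu⟩ := exists_worm_eqv A
    ⟨n :: u, hu.dia n⟩

end RCForm

namespace IgnatievModel

open RCForm

def IsPoint (x : ℕ → Ordinal.{0}) : Prop := ∀ k, x (k + 1) ≤ lastExp (x k)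

def Sat : (ℕ → Ordinal.{0}) → RCForm → Prop
  | _, .top => True
  | x, .and A B => Sat x A ∧ Sat x B
  | x, .dia n A => ∃ y, IsPoint y ∧ (∀ k < n, y k = x k) ∧ y n < x n ∧ Sat y A

def IsThreshold (c : ℕ → Ordinal.{0}) : Prop :=
  (∀ k, lastExp (c k) = c (k + 1)) ∧ ∃ K, ∀ k, K ≤ k → c k = 0

theorem IsThreshold.isPoint {c : ℕ → Ordinal.{0}} (h : IsThreshold c) : IsPoint c :=
  fun k => (h.1 k).ge

def IsThresholdOf (c : ℕ → Ordinal.{0}) (A : RCForm) : Prop :=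
  IsThreshold c ∧ ∀ x, IsPoint x → (Sat x A ↔ c ≤ x)

noncomputable def pointClosure (v : ℕ → Ordinal.{0}) (K k : ℕ) : Ordinal.{0} :=
  if K ≤ k then 0 else raiseLastExp (v k) (pointClosure v K (k + 1))
termination_by K - k

section PointClosure

variable {v : ℕ → Ordinal.{0}} {K : ℕ}

theorem pointClosure_of_le {k : ℕ} (hk : K ≤ k) : pointClosure v K k = 0 := by
  rw [pointClosure, if_pos hk]

theorem pointClosure_of_lt {k : ℕ} (hk : k < K) :
    pointClosure v K k = raiseLastExp (v k) (pointClosure v K (k + 1)) := by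
  rw [pointClosure, if_neg hk.not_ge]

theorem le_pointClosure (hv : ∀ k, K ≤ k → v k = 0) : v ≤ pointClosure v K := fun k => by
  rcases le_or_gt K k with hk | hk
  · rw [hv k hk]; exact zero_le
  · rw [pointClosure_of_lt hk]; exact (raiseLastExp_spec _ _).1

theorem pointClosure_le {x : ℕ → Ordinal.{0}} (hx : IsPoint x) (hvx : v ≤ x) (k : ℕ) :
    pointClosure v K k ≤ x k := by
  rcases le_or_gt K k with hk | hk
  · rw [pointClosure_of_le hk]; exact zero_le
  · rw [pointClosure_of_lt hk]
    exact raiseLastExp_le (hvx k) ((pointClosure_le hx hvx (k + 1)).trans (hx k))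
termination_by K - k

theorem lastExp_pointClosure (hv : ∀ k, lastExp (v k) ≤ v (k + 1))
    (hsupp : ∀ k, K ≤ k → v k = 0) (k : ℕ) :
    lastExp (pointClosure v K k) = pointClosure v K (k + 1) := by
  rcases le_or_gt K k with hk | hk
  · rw [pointClosure_of_le hk, pointClosure_of_le (hk.trans k.le_succ), lastExp_zero]
  · rw [pointClosure_of_lt hk]
    exact lastExp_raiseLastExp ((hv k).trans (le_pointClosure hsupp (k + 1)))

theorem exists_isThreshold_le_iff (hv : ∀ k, lastExp (v k) ≤ v (k + 1))
    (hsupp : ∀ k, K ≤ k → v k = 0) :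
    ∃ c, IsThreshold c ∧ ∀ x, IsPoint x → (c ≤ x ↔ v ≤ x) :=
  ⟨pointClosure v K, ⟨lastExp_pointClosure hv hsupp, K, fun _ => pointClosure_of_le⟩,
    fun _ hx => ⟨(le_pointClosure hsupp).trans, pointClosure_le hx⟩⟩

end PointClosure

theorem IsPoint.splice {x c : ℕ → Ordinal.{0}} (hx : IsPoint x) (hc : IsPoint c) {n : ℕ}
    (h : c n ≤ x n) : IsPoint fun k => if k < n then x k else c k := by
  intro k
  dsimp only
  split_ifs with h₁ h₂ h₂
  · exact hx k
  · omega
  · obtain rfl : k + 1 = n := by omega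
    exact h.trans (hx k)
  · exact hc k

theorem sat_dia_iff {a x : ℕ → Ordinal.{0}} {A : RCForm} {n : ℕ} (ha : IsThresholdOf a A)
    (hx : IsPoint x) : Sat x (dia n A) ↔ (∀ k < n, a k ≤ x k) ∧ a n < x n := by
  constructor
  · rintro ⟨y, hy, hyx, hyn, hyA⟩
    have hay := (ha.2 y hy).1 hyA
    exact ⟨fun k hk => hyx k hk ▸ hay k, (hay n).trans_lt hyn⟩
  · rintro ⟨hle, hlt⟩
    have hy := hx.splice ha.1.isPoint hlt.le
    refine ⟨_, hy, fun k hk => if_pos hk, by simpa using hlt, (ha.2 _ hy).2 fun k => ?_⟩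
    dsimp only
    split_ifs with hk
    · exact hle k hk
    · exact le_rfl

/-- If `x m = a m`, then `x (k + 1) ≤ lastExp (x k) = lastExp (a k) ≤ a (k + 1)` would force
`x ≤ a` from `m` up to `n`. -/
theorem IsPoint.lt_of_le_of_lt {x a : ℕ → Ordinal.{0}} (hx : IsPoint x)
    (ha : ∀ k, lastExp (a k) ≤ a (k + 1)) {m n : ℕ} (hmn : m < n) (hle : ∀ k < n, a k ≤ x k)
    (hlt : a n < x n) : a m < x m := by
  by_contra! hxm
  have key : ∀ k, m ≤ k → k ≤ n → x k ≤ a k := by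
    intro k hmk
    induction k, hmk using Nat.le_induction with
    | base => exact fun _ => hxm
    | succ k _ ih =>
      intro hk
      have hxk : x k = a k := le_antisymm (ih (by omega)) (hle k (by omega))
      exact (hx k).trans (hxk ▸ ha k)
  exact (key n hmn.le le_rfl).not_gt hlt

theorem IsThresholdOf.exists_and {a b : ℕ → Ordinal.{0}} {A B : RCForm}
    (ha : IsThresholdOf a A) (hb : IsThresholdOf b B) : ∃ c, IsThresholdOf c (A.and B) := by
  obtain ⟨Ka, hKa⟩ := ha.1.2
  obtain ⟨Kb, hKb⟩ := hb.1.2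
  have hv : ∀ k, lastExp ((a ⊔ b) k) ≤ (a ⊔ b) (k + 1) := fun k => by
    rcases le_total (a k) (b k) with h | h
    · rw [Pi.sup_apply, max_eq_right h, hb.1.1]; exact le_sup_right
    · rw [Pi.sup_apply, max_eq_left h, ha.1.1]; exact le_sup_left
  have hsupp : ∀ k, max Ka Kb ≤ k → (a ⊔ b) k = 0 := fun k hk => by
    rw [Pi.sup_apply, hKa k (le_of_max_le_left hk), hKb k (le_of_max_le_right hk), max_self]
  obtain ⟨c, hc, hcv⟩ := exists_isThreshold_le_iff hv hsupp
  exact ⟨c, hc, fun x hx =>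
    ((and_congr (ha.2 x hx) (hb.2 x hx)).trans sup_le_iff.symm).trans (hcv x hx).symm⟩

theorem IsThresholdOf.exists_dia {a : ℕ → Ordinal.{0}} {A : RCForm} (ha : IsThresholdOf a A)
    (n : ℕ) : ∃ c, IsThresholdOf c (dia n A) := by
  obtain ⟨K, hK⟩ := ha.1.2
  let v : ℕ → Ordinal.{0} := fun k => if k < n then a k else if k = n then a n + 1 else 0
  have hv : ∀ k, lastExp (v k) ≤ v (k + 1) := fun k => by
    rcases lt_trichotomy k n with hk | rfl | hk
    · simp only [v, if_pos hk, ha.1.1 k]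
      split_ifs with h₁ h₂
      · exact le_rfl
      · rw [← h₂]; exact le_self_add
      · omega
    · simp [v]
    · simp [v, hk.not_gt, hk.ne']
  have hsupp : ∀ k, max K (n + 1) ≤ k → v k = 0 := fun k hk => by
    simp only [v, if_neg (by omega : ¬k < n), if_neg (by omega : k ≠ n)]
  obtain ⟨c, hc, hcv⟩ := exists_isThreshold_le_iff hv hsupp
  refine ⟨c, hc, fun x hx => (sat_dia_iff ha hx).trans (Iff.trans ?_ (hcv x hx).symm)⟩
  constructor
  · rintro ⟨hle, hlt⟩ k
    simp only [v]
    split_ifs with h₁ h₂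
    · exact hle k h₁
    · subst h₂; exact Order.add_one_le_iff.2 hlt
    · exact zero_le
  · intro h
    exact ⟨fun k hk => by simpa [v, hk] using h k, by simpa [v, Order.add_one_le_iff] using h n⟩

theorem exists_isThresholdOf : ∀ A : RCForm, ∃ c, IsThresholdOf c A
  | .top => ⟨0, ⟨fun _ => lastExp_zero, 0, fun _ _ => rfl⟩, fun _ _ => iff_of_true trivial zero_le⟩
  | .and A B =>
    have ⟨_, ha⟩ := exists_isThresholdOf A
    have ⟨_, hb⟩ := exists_isThresholdOf B
    ha.exists_and hb
  | .dia n A =>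
    have ⟨_, ha⟩ := exists_isThresholdOf A
    ha.exists_dia n

theorem sound {A B : RCForm} (h : RCSeq A B) {x : ℕ → Ordinal.{0}} (hx : IsPoint x)
    (hA : Sat x A) : Sat x B := by
  induction h generalizing x with
  | id => exact hA
  | top => trivial
  | cut _ _ ih₁ ih₂ => exact ih₂ hx (ih₁ hx hA)
  | andE₁ => exact hA.1
  | andE₂ => exact hA.2
  | andI _ _ ih₁ ih₂ => exact ⟨ih₁ hx hA, ih₂ hx hA⟩
  | mono n _ ih =>
    obtain ⟨y, hy, hyx, hyn, hyA⟩ := hA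
    exact ⟨y, hy, hyx, hyn, ih hy hyA⟩
  | trans n A =>
    obtain ⟨y, hy, hyx, hyn, z, hz, hzy, hzn, hzA⟩ := hA
    exact ⟨z, hz, fun k hk => (hzy k hk).trans (hyx k hk), hzn.trans hyn, hzA⟩
  | monoN A hmn =>
    obtain ⟨a, ha⟩ := exists_isThresholdOf A
    obtain ⟨hle, hlt⟩ := (sat_dia_iff ha hx).1 hA
    exact (sat_dia_iff ha hx).2
      ⟨fun k hk => hle k (hk.trans hmn), hx.lt_of_le_of_lt (fun k => (ha.1.1 k).le) hmn hle hlt⟩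
  | axJ A B hmn =>
    obtain ⟨⟨y, hy, hyx, hyn, hyA⟩, z, hz, hzx, hzm, hzB⟩ := hA
    refine ⟨y, hy, hyx, hyn, hyA, z, hz, fun k hk => (hzx k hk).trans (hyx k (hk.trans hmn)).symm,
      ?_, hzB⟩
    rwa [hyx _ hmn]

end IgnatievModel

open IgnatievModel in
theorem wellFounded_rcLt0 : WellFounded RCLt0 := by
  choose c hc using exists_isThresholdOf
  refine Subrelation.wf (fun {A B} (h : RCSeq B (.dia 0 A)) => ?_)
    (InvImage.wf (fun A => c A 0) Ordinal.lt_wf)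
  have hB := (hc B).1.isPoint
  exact ((sat_dia_iff (hc A) hB).1 (sound h hB (((hc B).2 _ hB).2 le_rfl))).2

open RCForm in
theorem rcLt0_trichotomy (A B : RCForm) : RCLt0 A B ∨ Eqv A B ∨ RCLt0 B A := by
  obtain ⟨u, hu⟩ := exists_worm_eqv A
  obtain ⟨v, hv⟩ := exists_worm_eqv B
  rcases lt_trichotomy (wormOrd u) (wormOrd v) with h | h | h
  · exact .inl (.cut hv.1 (.cut ((ordReflected u v).1 h) (.mono 0 hu.2)))
  · exact .inr (.inl (hu.trans (((ordReflected u v).2 h).trans hv.symm)))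
  · exact .inr (.inr (.cut hu.1 (.cut ((ordReflected v u).1 h) (.mono 0 hv.2))))

namespace RCW

theorem lt_trichotomy (a b : RCW) : RCWLt a b ∨ a = b ∨ RCWLt b a := by
  induction a, b using Quotient.inductionOn₂ with
  | h A B => exact (rcLt0_trichotomy A B).imp_right (Or.imp_left Quotient.sound)

theorem wellFounded_lt : WellFounded RCWLt :=
  Subrelation.wf (fun {a b} h => by rwa [← Quotient.out_eq a, ← Quotient.out_eq b] at h)
    (InvImage.wf Quotient.out wellFounded_rcLt0)

end RCW

/-- The set of `RC⁰` formulas is well-founded under `<₀`, and consequently the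
Beklemishev ordinal notation system `(W/∼, <₀)` is a well-ordering. -/
theorem rc0_lt0_wellFounded_and_wellOrder :
    WellFounded RCLt0 ∧ IsWellOrder RCW RCWLt :=
  ⟨wellFounded_rcLt0,
    { wf := RCW.wellFounded_lt
      trichotomous := fun a b hab hba =>
        ((RCW.lt_trichotomy a b).resolve_left hab).resolve_right hba }⟩
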